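/- arXiv:1311.3084 — 3 statements merged into one kernel-verified Lean document; each statement's English description precedes it below -/
import Mathlib

section
/- For all complex s and w with 0 < Re s < 1, 0 < Re w < 1 and s + w − 1/2 not an integer multiple of 1 (so that all gamma factors are defined), the identity Γ(s)Γ(1−s)Γ(w)Γ(1−w) / (Γ(s + w − 1/2) Γ(3/2 − s − w)) = π (1 − cot(πs) cot(πw)) holds. -/
open Complex

lemma sin_pi_mul_ne_zero_of_re (z : ℂ) (h0 : 0 < z.re) (h1 : z.re < 1) :
    Complex.sin ((Real.pi : ℂ) * z) ≠ 0 := by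
  intro h
  rw [Complex.sin_eq_zero_iff] at h
  obtain ⟨k, hk⟩ := h
  have hpi : (Real.pi : ℂ) ≠ 0 := by
    exact_mod_cast Real.pi_ne_zero
  have hz : z = (k : ℂ) := by
    apply mul_left_cancel₀ hpi
    rw [hk]; ring
  have : z.re = (k : ℝ) := by rw [hz, Complex.intCast_re]
  rw [this] at h0 h1
  have : (0:ℤ) < k := by exact_mod_cast h0
  have : k < 1 := by exact_mod_cast h1
  omega

/-- For `0 < Re s < 1`, `0 < Re w < 1` with `s + w - 1/2` not an integer,
`Γ(s)Γ(1−s)Γ(w)Γ(1−w)/(Γ(s+w−1/2)Γ(3/2−s−w)) = π(1 − cot(πs)cot(πw))`. -/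
theorem gamma_kernel_eq_cot (s w : ℂ)
    (hs0 : 0 < s.re) (hs1 : s.re < 1) (hw0 : 0 < w.re) (hw1 : w.re < 1)
    (hsw : ∀ n : ℤ, s + w - 1 / 2 ≠ (n : ℂ)) :
    Complex.Gamma s * Complex.Gamma (1 - s) * Complex.Gamma w * Complex.Gamma (1 - w) /
        (Complex.Gamma (s + w - 1 / 2) * Complex.Gamma (3 / 2 - s - w)) =
      (Real.pi : ℂ) * (1 - Complex.cot (Real.pi * s) * Complex.cot (Real.pi * w)) := by
  have h1 := Complex.Gamma_mul_Gamma_one_sub s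
  have h2 := Complex.Gamma_mul_Gamma_one_sub w
  have h3 := Complex.Gamma_mul_Gamma_one_sub (s + w - 1/2)
  have e3 : (1 : ℂ) - (s + w - 1/2) = 3/2 - s - w := by ring
  rw [e3] at h3
  have hss : Complex.sin ((Real.pi : ℂ) * s) ≠ 0 := sin_pi_mul_ne_zero_of_re s hs0 hs1
  have hsw' : Complex.sin ((Real.pi : ℂ) * w) ≠ 0 := sin_pi_mul_ne_zero_of_re w hw0 hw1
  have hs3 : Complex.sin ((Real.pi : ℂ) * (s + w - 1/2)) ≠ 0 := by
    intro h
    rw [Complex.sin_eq_zero_iff] at h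
    obtain ⟨k, hk⟩ := h
    have hpi : (Real.pi : ℂ) ≠ 0 := by exact_mod_cast Real.pi_ne_zero
    apply hsw k
    have : (Real.pi : ℂ) * (s + w - 1/2) = (Real.pi : ℂ) * k := by rw [hk]; ring
    exact mul_left_cancel₀ hpi this
  have hpi : (Real.pi : ℂ) ≠ 0 := by exact_mod_cast Real.pi_ne_zero
  have key : (Complex.Gamma s * Complex.Gamma (1 - s)) * (Complex.Gamma w * Complex.Gamma (1 - w))
      = ((Real.pi : ℂ) / Complex.sin ((Real.pi : ℂ) * s)) *
        ((Real.pi : ℂ) / Complex.sin ((Real.pi : ℂ) * w)) := by rw [h1, h2]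
  have hsin3 : Complex.sin ((Real.pi : ℂ) * (s + w - 1/2))
      = -(Complex.cos ((Real.pi : ℂ) * s) * Complex.cos ((Real.pi : ℂ) * w)
          - Complex.sin ((Real.pi : ℂ) * s) * Complex.sin ((Real.pi : ℂ) * w)) := by
    have : (Real.pi : ℂ) * (s + w - 1/2)
        = ((Real.pi : ℂ) * s + (Real.pi : ℂ) * w) - (Real.pi : ℂ)/2 := by ring
    rw [this, Complex.sin_sub, Complex.cos_add, Complex.sin_add]
    have c1 : Complex.cos ((Real.pi : ℂ)/2) = 0 := by
      rw [show ((Real.pi : ℂ)/2) = ((Real.pi/2 : ℝ) : ℂ) by push_cast; ring,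
        ← Complex.ofReal_cos, Real.cos_pi_div_two]; simp
    have c2 : Complex.sin ((Real.pi : ℂ)/2) = 1 := by
      rw [show ((Real.pi : ℂ)/2) = ((Real.pi/2 : ℝ) : ℂ) by push_cast; ring,
        ← Complex.ofReal_sin, Real.sin_pi_div_two]; simp
    rw [c1, c2]; ring
  rw [show Complex.Gamma s * Complex.Gamma (1 - s) * Complex.Gamma w * Complex.Gamma (1 - w)
      = (Complex.Gamma s * Complex.Gamma (1 - s)) * (Complex.Gamma w * Complex.Gamma (1 - w)) by
        ring, key, h3, Complex.cot, Complex.cot, hsin3]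
  field_simp
  ring
end

section
/- Let f, g be functions on (0,∞) whose Mellin transforms f*, g* on the line σ = {Re s = 1/2} satisfy ∫_{−∞}^∞ |(1/2 + iτ) f*(1/2 + iτ)|² dτ < ∞ and ∫_{−∞}^∞ |(1/2 + iθ) g*(1/2 + iθ)|² dθ < ∞. Then the convolution (f∗g)(x) = (√x/(2πi)²) ∫_σ ∫_σ [Γ(s)Γ(1−s)Γ(w)Γ(1−w)/(Γ(s+w−1/2)Γ(3/2−s−w))]² f*(s) g*(w) x^{−s−w} ds dw exists as an absolutely convergent integral, defines a continuous function on (0,∞), and satisfies the pointwise bound |(f∗g)(x)| ≤ (2π/√x) (∫_{−∞}^∞ |(1/2 + iτ) f*(1/2 + iτ)|² dτ)^{1/2} (∫_{−∞}^∞ |(1/2 + iθ) g*(1/2 + iθ)|² dθ)^{1/2} for all x > 0. -/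
open MeasureTheory Set Complex Filter

/-- The iterated Stieltjes transform. -/
noncomputable def S2 (f : ℝ → ℂ) (x : ℝ) : ℂ :=
  ∫ t in Ioi (0 : ℝ), (((Real.log x - Real.log t) / (x - t) : ℝ) : ℂ) * f t

/-- `fs` is the Mellin transform of `f` on the critical line `Re s = 1/2`,
in the mean-square (Mellin–Plancherel) sense. -/
def IsMellinPlancherel (f : ℝ → ℂ) (fs : ℂ → ℂ) : Prop :=
  Tendsto (fun R : ℝ =>
      ∫ τ : ℝ, ‖fs (1 / 2 + τ * I) -
        ∫ t in Ioo R⁻¹ R, (t : ℂ) ^ ((1 / 2 : ℂ) + τ * I - 1) * f t‖ ^ 2)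
    atTop (nhds 0)

/-- `L` is the Cauchy principal value `PV ∫₀^∞ f t/(t − x) dt` (the Hilbert transform of `f`
at `x`), understood as `lim_{ε→0⁺} (∫₀^{x/(1+ε)} + ∫_{x/(1−ε)}^∞) f t/(t − x) dt`. -/
def HasHilbertPV (f : ℝ → ℂ) (x : ℝ) (L : ℂ) : Prop :=
  Tendsto (fun ε : ℝ =>
      (∫ t in Ioo (0 : ℝ) (x / (1 + ε)), f t / ((t : ℂ) - (x : ℂ))) +
      ∫ t in Ioi (x / (1 - ε)), f t / ((t : ℂ) - (x : ℂ)))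
    (nhdsWithin 0 (Ioi 0)) (nhds L)

/-- The gamma kernel of the Mellin–Barnes convolution. -/
noncomputable def Kker (s w : ℂ) : ℂ :=
  Complex.Gamma s * Complex.Gamma (1 - s) * Complex.Gamma w * Complex.Gamma (1 - w) /
    (Complex.Gamma (s + w - 1 / 2) * Complex.Gamma (3 / 2 - s - w))

/-- The integrand of the double Mellin–Barnes convolution integral, with both critical lines
parametrized as `s = 1/2 + iτ`, `w = 1/2 + iθ`. -/
noncomputable def convIntegrand (fs gs : ℂ → ℂ) (x : ℝ) (q : ℝ × ℝ) : ℂ :=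
  (Kker (1 / 2 + q.1 * I) (1 / 2 + q.2 * I)) ^ 2 *
    fs (1 / 2 + q.1 * I) * gs (1 / 2 + q.2 * I) *
    (x : ℂ) ^ (-((1 / 2 + q.1 * I) + (1 / 2 + q.2 * I)))

/-- The Mellin–Barnes convolution `(f∗g)(x)`; since `ds dw = i dτ · i dθ` on the two critical
lines, `(√x/(2πi)²) ∫_σ∫_σ … ds dw = (√x/(4π²)) ∫∫ … dτ dθ`. -/
noncomputable def conv (fs gs : ℂ → ℂ) (x : ℝ) : ℂ :=
  ((Real.sqrt x / (4 * Real.pi ^ 2) : ℝ) : ℂ) * ∫ q : ℝ × ℝ, convIntegrand fs gs x q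

/-- `s ↦ s·fs(s)` belongs to `L₂` of the critical line `Re s = 1/2`. -/
def L2Line (fs : ℂ → ℂ) : Prop :=
  MemLp (fun τ : ℝ => ((1 / 2 : ℂ) + τ * I) * fs (1 / 2 + τ * I)) 2 volume

/-- `s ↦ s·fs(s)` belongs to `L₁` of the critical line `Re s = 1/2`. -/
def L1Line (fs : ℂ → ℂ) : Prop :=
  Integrable (fun τ : ℝ => ((1 / 2 : ℂ) + τ * I) * fs (1 / 2 + τ * I))

/-! On the critical lines the reflection formula turns the squared gamma kernel into
`(π cosh (π(τ+θ)) / (cosh (πτ) cosh (πθ)))²`, which is at most `4π²` because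
`cosh (a+b) ≤ 2 cosh a cosh b`, while `|x^{-s-w}| = 1/x`. Hence the integrand is dominated by
`(4π²/x) |f*(s)| |g*(w)|`, and Cauchy–Schwarz against `1/s ∈ L₂(σ)`, whose squared norm is `2π`,
gives `∫_σ |f*| ≤ √(2π) ‖s f*‖_{L₂(σ)}`. Absolute convergence and the bound follow at once;
continuity follows by dominated convergence, the dominating function being uniform on `x > x₀/2`. -/

open scoped Real

theorem Real.cosh_add_le_two_mul_cosh_mul_cosh (a b : ℝ) :
    Real.cosh (a + b) ≤ 2 * Real.cosh a * Real.cosh b := by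
  have hadd := Real.cosh_add a b
  have hsub := Real.cosh_sub a b
  have hpos := Real.cosh_pos (a - b)
  linarith

theorem inv_sq_add_sq_eq {a : ℝ} (ha : a ≠ 0) (τ : ℝ) :
    (a ^ 2 + τ ^ 2)⁻¹ = (a ^ 2)⁻¹ * (1 + (τ / a) ^ 2)⁻¹ := by
  field_simp

theorem integrable_inv_sq_add_sq {a : ℝ} (ha : a ≠ 0) :
    Integrable fun τ : ℝ => (a ^ 2 + τ ^ 2)⁻¹ := by
  simp only [inv_sq_add_sq_eq ha]
  exact (integrable_inv_one_add_sq.comp_div ha).const_mul _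

theorem integral_univ_inv_sq_add_sq {a : ℝ} (ha : 0 < a) :
    ∫ τ : ℝ, (a ^ 2 + τ ^ 2)⁻¹ = π / a := by
  simp only [inv_sq_add_sq_eq ha.ne']
  rw [integral_const_mul, Measure.integral_comp_div (fun τ => (1 + τ ^ 2)⁻¹),
    integral_univ_inv_one_add_sq, abs_of_pos ha, smul_eq_mul]
  field_simp

theorem integral_norm_mul_le_sqrt_mul_sqrt {α 𝕜 : Type*} [MeasurableSpace α] {μ : Measure α}
    [NormedDivisionRing 𝕜] {u v : α → 𝕜} (hu : MemLp u 2 μ) (hv : MemLp v 2 μ) :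
    ∫ t, ‖u t * v t‖ ∂μ ≤ √(∫ t, ‖u t‖ ^ 2 ∂μ) * √(∫ t, ‖v t‖ ^ 2 ∂μ) := by
  have hHolder := integral_mul_le_Lp_mul_Lq_of_nonneg Real.HolderConjugate.two_two
    (Eventually.of_forall fun t => norm_nonneg (u t))
    (Eventually.of_forall fun t => norm_nonneg (v t))
    (by simpa using hu.norm) (by simpa using hv.norm)
  simpa only [norm_mul, Real.rpow_two, Real.sqrt_eq_rpow] using hHolder

namespace Complex

theorem half_add_mul_I_ne_zero (τ : ℝ) : (1 / 2 : ℂ) + τ * I ≠ 0 := fun h => by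
  simpa using congrArg re h

theorem norm_half_add_mul_I_sq (τ : ℝ) : ‖(1 / 2 : ℂ) + τ * I‖ ^ 2 = (1 / 2) ^ 2 + τ ^ 2 := by
  have h := norm_add_mul_I (1 / 2) τ
  push_cast at h
  rw [h, Real.sq_sqrt (by positivity)]

theorem memLp_inv_half_add_mul_I : MemLp (fun τ : ℝ => ((1 / 2 : ℂ) + τ * I)⁻¹) 2 volume := by
  have hcont : Continuous fun τ : ℝ => ((1 / 2 : ℂ) + τ * I)⁻¹ :=
    (by fun_prop : Continuous fun τ : ℝ => (1 / 2 : ℂ) + τ * I).inv₀ half_add_mul_I_ne_zero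
  rw [memLp_two_iff_integrable_sq_norm hcont.aestronglyMeasurable]
  simpa only [norm_inv, inv_pow, norm_half_add_mul_I_sq] using
    integrable_inv_sq_add_sq (one_half_pos.ne' : (1 / 2 : ℝ) ≠ 0)

theorem integral_norm_inv_half_add_mul_I_sq :
    ∫ τ : ℝ, ‖((1 / 2 : ℂ) + τ * I)⁻¹‖ ^ 2 = 2 * π := by
  simp only [norm_inv, inv_pow, norm_half_add_mul_I_sq]
  rw [integral_univ_inv_sq_add_sq one_half_pos]
  ring

theorem sin_pi_mul_half_add_mul_I (τ : ℝ) : sin (π * (1 / 2 + τ * I)) = Real.cosh (π * τ) := by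
  rw [show (π : ℂ) * (1 / 2 + τ * I) = π / 2 + (π * τ : ℝ) * I by push_cast; ring,
    sin_add, sin_pi_div_two, cos_pi_div_two, cos_mul_I, ofReal_cosh]
  ring

theorem Gamma_mul_Gamma_one_sub_half_add_mul_I (τ : ℝ) :
    Gamma (1 / 2 + τ * I) * Gamma (1 - (1 / 2 + τ * I)) = π / Real.cosh (π * τ) := by
  rw [Gamma_mul_Gamma_one_sub, sin_pi_mul_half_add_mul_I]

end Complex

open Complex in
theorem Kker_half_add_mul_I (τ θ : ℝ) :
    Kker (1 / 2 + τ * I) (1 / 2 + θ * I) =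
      ((π * Real.cosh (π * (τ + θ)) / (Real.cosh (π * τ) * Real.cosh (π * θ)) : ℝ) : ℂ) := by
  have hsum : (1 / 2 + τ * I) + (1 / 2 + θ * I) - 1 / 2 = 1 / 2 + ((τ + θ : ℝ) : ℂ) * I := by
    push_cast; ring
  have hrefl : 3 / 2 - (1 / 2 + τ * I) - (1 / 2 + θ * I) = 1 - (1 / 2 + ((τ + θ : ℝ) : ℂ) * I) := by
    push_cast; ring
  rw [Kker, hsum, hrefl, mul_assoc _ (Gamma (1 / 2 + θ * I)),
    Gamma_mul_Gamma_one_sub_half_add_mul_I, Gamma_mul_Gamma_one_sub_half_add_mul_I,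
    Gamma_mul_Gamma_one_sub_half_add_mul_I]
  have hτ := (Real.cosh_pos (π * τ)).ne'
  have hθ := (Real.cosh_pos (π * θ)).ne'
  have hτθ := (Real.cosh_pos (π * (τ + θ))).ne'
  push_cast
  field_simp

theorem norm_Kker_half_add_mul_I_le (τ θ : ℝ) : ‖Kker (1 / 2 + τ * I) (1 / 2 + θ * I)‖ ≤ 2 * π := by
  have hτ := Real.cosh_pos (π * τ)
  have hθ := Real.cosh_pos (π * θ)
  rw [Kker_half_add_mul_I, norm_real, Real.norm_of_nonneg (by positivity),
    div_le_iff₀ (by positivity), mul_add]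
  calc π * Real.cosh (π * τ + π * θ)
      ≤ π * (2 * Real.cosh (π * τ) * Real.cosh (π * θ)) :=
        mul_le_mul_of_nonneg_left (Real.cosh_add_le_two_mul_cosh_mul_cosh _ _) Real.pi_pos.le
    _ = 2 * π * (Real.cosh (π * τ) * Real.cosh (π * θ)) := by ring

theorem continuous_Kker_half_add_mul_I :
    Continuous fun q : ℝ × ℝ => Kker (1 / 2 + q.1 * I) (1 / 2 + q.2 * I) := by
  simp only [Kker_half_add_mul_I]
  refine continuous_ofReal.comp (Continuous.div (by fun_prop) (by fun_prop) fun q => ?_)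
  exact (mul_pos (Real.cosh_pos _) (Real.cosh_pos _)).ne'

namespace L2Line

variable {fs : ℂ → ℂ}

theorem integrable (h : L2Line fs) : Integrable fun τ : ℝ => fs (1 / 2 + τ * I) :=
  (memLp_inv_half_add_mul_I.integrable_mul h).congr <| Eventually.of_forall fun τ =>
    inv_mul_cancel_left₀ (half_add_mul_I_ne_zero τ) _

theorem integral_norm_le (h : L2Line fs) :
    ∫ τ : ℝ, ‖fs (1 / 2 + τ * I)‖ ≤
      √(2 * π) * √(∫ τ : ℝ, ‖((1 / 2 : ℂ) + τ * I) * fs (1 / 2 + τ * I)‖ ^ 2) := by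
  simpa only [inv_mul_cancel_left₀ (half_add_mul_I_ne_zero _),
    integral_norm_inv_half_add_mul_I_sq] using
    integral_norm_mul_le_sqrt_mul_sqrt memLp_inv_half_add_mul_I h

end L2Line

section convIntegrand

variable {fs gs : ℂ → ℂ} {x : ℝ}

theorem integrable_norm_mul_norm_of_L2Line (hf : L2Line fs) (hg : L2Line gs) :
    Integrable fun q : ℝ × ℝ => ‖fs (1 / 2 + q.1 * I)‖ * ‖gs (1 / 2 + q.2 * I)‖ := by
  rw [Measure.volume_eq_prod]
  exact hf.integrable.norm.mul_prod hg.integrable.norm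

theorem norm_convIntegrand_le (hx : 0 < x) (q : ℝ × ℝ) :
    ‖convIntegrand fs gs x q‖ ≤
      4 * π ^ 2 / x * (‖fs (1 / 2 + q.1 * I)‖ * ‖gs (1 / 2 + q.2 * I)‖) := by
  have hpow : ‖(x : ℂ) ^ (-((1 / 2 + q.1 * I) + (1 / 2 + q.2 * I)))‖ = x⁻¹ := by
    rw [norm_cpow_eq_rpow_re_of_pos hx, ← Real.rpow_neg_one]
    congr 1
    norm_num
  have hK : ‖Kker (1 / 2 + q.1 * I) (1 / 2 + q.2 * I)‖ ^ 2 ≤ (2 * π) ^ 2 := by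
    gcongr
    exact norm_Kker_half_add_mul_I_le _ _
  rw [convIntegrand, norm_mul, norm_mul, norm_mul, norm_pow, hpow]
  calc ‖Kker (1 / 2 + q.1 * I) (1 / 2 + q.2 * I)‖ ^ 2 * ‖fs (1 / 2 + q.1 * I)‖ *
        ‖gs (1 / 2 + q.2 * I)‖ * x⁻¹
      ≤ (2 * π) ^ 2 * ‖fs (1 / 2 + q.1 * I)‖ * ‖gs (1 / 2 + q.2 * I)‖ * x⁻¹ := by gcongr
    _ = 4 * π ^ 2 / x * (‖fs (1 / 2 + q.1 * I)‖ * ‖gs (1 / 2 + q.2 * I)‖) := by ring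

theorem aestronglyMeasurable_convIntegrand (hf : L2Line fs) (hg : L2Line gs) (x : ℝ) :
    AEStronglyMeasurable (convIntegrand fs gs x) := by
  have hfs : AEStronglyMeasurable fun q : ℝ × ℝ => fs (1 / 2 + q.1 * I) := by
    rw [Measure.volume_eq_prod]
    exact hf.integrable.aestronglyMeasurable.comp_fst
  have hgs : AEStronglyMeasurable fun q : ℝ × ℝ => gs (1 / 2 + q.2 * I) := by
    rw [Measure.volume_eq_prod]
    exact hg.integrable.aestronglyMeasurable.comp_snd
  have hpow : Continuous fun q : ℝ × ℝ => (x : ℂ) ^ (-((1 / 2 + q.1 * I) + (1 / 2 + q.2 * I))) :=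
    Continuous.const_cpow (by fun_prop) (Or.inr fun q h => by simpa using congrArg re h)
  exact (((continuous_Kker_half_add_mul_I.pow 2).aestronglyMeasurable.mul hfs).mul hgs).mul
    hpow.aestronglyMeasurable

theorem integrable_convIntegrand (hf : L2Line fs) (hg : L2Line gs) (hx : 0 < x) :
    Integrable (convIntegrand fs gs x) :=
  ((integrable_norm_mul_norm_of_L2Line hf hg).const_mul _).mono'
    (aestronglyMeasurable_convIntegrand hf hg x) (Eventually.of_forall (norm_convIntegrand_le hx))

theorem norm_integral_convIntegrand_le (hf : L2Line fs) (hg : L2Line gs) (hx : 0 < x) :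
    ‖∫ q, convIntegrand fs gs x q‖ ≤
      4 * π ^ 2 / x * ((∫ τ : ℝ, ‖fs (1 / 2 + τ * I)‖) * ∫ θ : ℝ, ‖gs (1 / 2 + θ * I)‖) :=
  calc ‖∫ q, convIntegrand fs gs x q‖
      ≤ ∫ q, ‖convIntegrand fs gs x q‖ := norm_integral_le_integral_norm _
    _ ≤ ∫ q : ℝ × ℝ, 4 * π ^ 2 / x * (‖fs (1 / 2 + q.1 * I)‖ * ‖gs (1 / 2 + q.2 * I)‖) :=
        integral_mono (integrable_convIntegrand hf hg hx).norm
          ((integrable_norm_mul_norm_of_L2Line hf hg).const_mul _) (norm_convIntegrand_le hx)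
    _ = _ := by
        rw [integral_const_mul, Measure.volume_eq_prod,
          integral_prod_mul (fun τ : ℝ => ‖fs (1 / 2 + τ * I)‖) fun θ : ℝ => ‖gs (1 / 2 + θ * I)‖]

theorem continuousOn_integral_convIntegrand (hf : L2Line fs) (hg : L2Line gs) :
    ContinuousOn (fun x => ∫ q, convIntegrand fs gs x q) (Ioi 0) := by
  intro x₀ hx₀
  have hx₀ : 0 < x₀ := hx₀
  refine ContinuousAt.continuousWithinAt <| continuousAt_of_dominated
    (bound := fun q => 4 * π ^ 2 / (x₀ / 2) * (‖fs (1 / 2 + q.1 * I)‖ * ‖gs (1 / 2 + q.2 * I)‖))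
    (Eventually.of_forall (aestronglyMeasurable_convIntegrand hf hg)) ?_
    ((integrable_norm_mul_norm_of_L2Line hf hg).const_mul _) (Eventually.of_forall fun q => ?_)
  · filter_upwards [Ioi_mem_nhds (half_lt_self hx₀)] with x hx
    have hx : x₀ / 2 < x := hx
    refine Eventually.of_forall fun q => (norm_convIntegrand_le (by linarith) q).trans ?_
    gcongr
  · exact continuousAt_const.mul <| (continuousAt_cpow_const (ofReal_mem_slitPlane.2 hx₀)).comp
      continuous_ofReal.continuousAt

end convIntegrand

section conv

variable {fs gs : ℂ → ℂ}

theorem continuousOn_conv (hf : L2Line fs) (hg : L2Line gs) : ContinuousOn (conv fs gs) (Ioi 0) :=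
  (continuous_ofReal.comp (Real.continuous_sqrt.div_const _)).continuousOn.mul
    (continuousOn_integral_convIntegrand hf hg)

theorem norm_conv_le (hf : L2Line fs) (hg : L2Line gs) {x : ℝ} (hx : 0 < x) :
    ‖conv fs gs x‖ ≤ 2 * π / √x *
      √(∫ τ : ℝ, ‖((1 / 2 : ℂ) + τ * I) * fs (1 / 2 + τ * I)‖ ^ 2) *
      √(∫ θ : ℝ, ‖((1 / 2 : ℂ) + θ * I) * gs (1 / 2 + θ * I)‖ ^ 2) := by
  set Cf := √(∫ τ : ℝ, ‖((1 / 2 : ℂ) + τ * I) * fs (1 / 2 + τ * I)‖ ^ 2)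
  set Cg := √(∫ θ : ℝ, ‖((1 / 2 : ℂ) + θ * I) * gs (1 / 2 + θ * I)‖ ^ 2)
  have hG0 : 0 ≤ ∫ θ : ℝ, ‖gs (1 / 2 + θ * I)‖ := integral_nonneg fun _ => norm_nonneg _
  calc ‖conv fs gs x‖ = √x / (4 * π ^ 2) * ‖∫ q, convIntegrand fs gs x q‖ := by
        rw [conv, norm_mul, norm_real, Real.norm_of_nonneg (by positivity)]
    _ ≤ √x / (4 * π ^ 2) *
        (4 * π ^ 2 / x * ((∫ τ : ℝ, ‖fs (1 / 2 + τ * I)‖) * ∫ θ : ℝ, ‖gs (1 / 2 + θ * I)‖)) := by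
        gcongr
        exact norm_integral_convIntegrand_le hf hg hx
    _ ≤ √x / (4 * π ^ 2) * (4 * π ^ 2 / x * ((√(2 * π) * Cf) * (√(2 * π) * Cg))) := by
        gcongr
        exacts [hf.integral_norm_le, hg.integral_norm_le]
    _ = 2 * π / √x * Cf * Cg := by
        field_simp
        rw [Real.sq_sqrt hx.le, Real.sq_sqrt (by positivity)]
        ring

end conv

theorem conv_exists_continuous_bound_general (fstar gstar : ℂ → ℂ)
    (hf2 : L2Line fstar) (hg2 : L2Line gstar) :
    (∀ x : ℝ, 0 < x → Integrable (convIntegrand fstar gstar x)) ∧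
    ContinuousOn (conv fstar gstar) (Ioi (0 : ℝ)) ∧
    ∀ x : ℝ, 0 < x →
      ‖conv fstar gstar x‖ ≤ (2 * Real.pi / Real.sqrt x) *
        Real.sqrt (∫ τ : ℝ, ‖((1 / 2 : ℂ) + τ * I) * fstar (1 / 2 + τ * I)‖ ^ 2) *
        Real.sqrt (∫ θ : ℝ, ‖((1 / 2 : ℂ) + θ * I) * gstar (1 / 2 + θ * I)‖ ^ 2) :=
  ⟨fun _ hx => integrable_convIntegrand hf2 hg2 hx, continuousOn_conv hf2 hg2,
    fun _ hx => norm_conv_le hf2 hg2 hx⟩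

/-- **Lemma 1, part 1.** If `s f*(s), s g*(s) ∈ L₂(σ)`, the Mellin–Barnes
convolution exists as an absolutely convergent integral, is continuous on `(0,∞)`, and
`|(f∗g)(x)| ≤ (2π/√x) ‖s f*‖_{L₂(σ)} ‖s g*‖_{L₂(σ)}` for all `x > 0`. -/
theorem conv_exists_continuous_bound (f g : ℝ → ℂ)
    (hf : MemLp f 2 (volume.restrict (Ioi (0 : ℝ))))
    (hg : MemLp g 2 (volume.restrict (Ioi (0 : ℝ))))
    (fstar gstar : ℂ → ℂ)
    (hfstar : IsMellinPlancherel f fstar) (hgstar : IsMellinPlancherel g gstar)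
    (hf2 : L2Line fstar) (hg2 : L2Line gstar) :
    (∀ x : ℝ, 0 < x → Integrable (convIntegrand fstar gstar x)) ∧
    ContinuousOn (conv fstar gstar) (Ioi (0 : ℝ)) ∧
    ∀ x : ℝ, 0 < x →
      ‖conv fstar gstar x‖ ≤ (2 * Real.pi / Real.sqrt x) *
        Real.sqrt (∫ τ : ℝ, ‖((1 / 2 : ℂ) + τ * I) * fstar (1 / 2 + τ * I)‖ ^ 2) *
        Real.sqrt (∫ θ : ℝ, ‖((1 / 2 : ℂ) + θ * I) * gstar (1 / 2 + θ * I)‖ ^ 2) :=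
  conv_exists_continuous_bound_general fstar gstar hf2 hg2
end

section
/- Define, for 0 < ε < 1/2 and s ∈ ℂ with Re s = 1/2, φ_ε(s) = (1/π) (∫₀^{1−ε} + ∫_{1+ε}^∞) t^{s−1}/(1 − t) dt. Then there exists an absolute constant C > 0 such that |φ_ε(s)| ≤ C |s| for all 0 < ε < 1/2 and all s with Re s = 1/2. -/
/-! On `Re s = 1/2` the integrand is `O(t^{-1/2})` at `0` and `O(t^{-3/2})` at `∞`, so the pieces
over `(0, 1/2]` and `(2, ∞)` are bounded. Near `t = 1` write
`t^{s-1}/(1-t) = (t^{s-1} - 1)/(1-t) + 1/(1-t)`: the first term is `O(|s - 1|)` by the mean value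
theorem, and the integrals of `1/(1-t)` over `[1/2, 1-ε]` and `[1+ε, 2]` cancel up to `-log 2`,
uniformly in `ε`. -/

open MeasureTheory Set Complex Filter
open scoped Interval

/-- The truncation `φ_ε(s) = (1/π)(∫₀^{1−ε} + ∫_{1+ε}^∞) t^{s−1}/(1−t) dt` of the principal
value integral `(1/π) PV ∫₀^∞ t^{s−1}/(1−t) dt`. -/
noncomputable def phiEps (ε : ℝ) (s : ℂ) : ℂ :=
  ((1 / Real.pi : ℝ) : ℂ) *
    ((∫ t in Ioo (0 : ℝ) (1 - ε), (t : ℂ) ^ (s - 1) / (1 - (t : ℂ))) +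
      ∫ t in Ioi (1 + ε), (t : ℂ) ^ (s - 1) / (1 - (t : ℂ)))

noncomputable def phiIntegrand (s : ℂ) (t : ℝ) : ℂ := (t : ℂ) ^ (s - 1) / (1 - (t : ℂ))

lemma norm_one_sub_ofReal (t : ℝ) : ‖(1 : ℂ) - t‖ = |1 - t| := by
  rw [← ofReal_one, ← ofReal_sub, norm_real, Real.norm_eq_abs]

lemma uIcc_subset_Ioi_zero_diff_one {a b : ℝ} (ha : 0 < a) (hb : 0 < b)
    (h1 : (1 : ℝ) ∉ [[a, b]]) :
    [[a, b]] ⊆ Ioi 0 \ {1} :=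
  fun _ ht => ⟨lt_of_lt_of_le (lt_min ha hb) ht.1, fun h => h1 (h ▸ ht)⟩

lemma norm_ofReal_cpow_sub_one_le {w : ℂ} (hw₀ : -1 ≤ w.re) (hw₁ : w.re ≤ 1) {t : ℝ}
    (ht : 1 / 2 ≤ t) :
    ‖(t : ℂ) ^ w - 1‖ ≤ 4 * ‖w‖ * |t - 1| := by
  have hderiv : ∀ u ∈ Ici (1 / 2 : ℝ),
      HasDerivWithinAt (fun y : ℝ => (y : ℂ) ^ w) (w * (u : ℂ) ^ (w - 1)) (Ici (1 / 2)) u :=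
    fun u hu => ((hasStrictDerivAt_cpow_const (ofReal_mem_slitPlane.2
      (by linarith [mem_Ici.1 hu]))).hasDerivAt.comp_ofReal).hasDerivWithinAt
  have hbound : ∀ u ∈ Ici (1 / 2 : ℝ), ‖w * (u : ℂ) ^ (w - 1)‖ ≤ 4 * ‖w‖ := by
    intro u (hu : 1 / 2 ≤ u)
    rw [norm_mul, norm_cpow_eq_rpow_re_of_pos (by linarith), mul_comm, sub_re, one_re]
    gcongr
    calc u ^ (w.re - 1) ≤ (1 / 2 : ℝ) ^ (w.re - 1) :=
          Real.rpow_le_rpow_of_nonpos (by norm_num) hu (by linarith)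
      _ ≤ (1 / 2 : ℝ) ^ (-2 : ℝ) :=
          Real.rpow_le_rpow_of_exponent_ge (by norm_num) (by norm_num) (by linarith)
      _ = 4 := by norm_num [Real.rpow_neg, Real.rpow_two]
  simpa [Real.norm_eq_abs] using
    (convex_Ici (1 / 2 : ℝ)).norm_image_sub_le_of_norm_hasDerivWithin_le hderiv hbound
      (mem_Ici.2 (by norm_num : (1 / 2 : ℝ) ≤ 1)) (mem_Ici.2 ht)

lemma integral_inv_one_sub_add_integral_inv_one_sub {ε : ℝ} (hε : 0 < ε) :
    (∫ t in (1 / 2 : ℝ)..1 - ε, (1 - t)⁻¹) + ∫ t in 1 + ε..2, (1 - t)⁻¹ = -Real.log 2 := by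
  have hsub : ∀ a b : ℝ, ∫ t in a..b, (1 - t)⁻¹ = ∫ x in 1 - b..1 - a, x⁻¹ :=
    fun a b => intervalIntegral.integral_comp_sub_left (fun x : ℝ => x⁻¹) 1
  rw [hsub, hsub, sub_sub_cancel, sub_add_cancel_left, integral_inv, integral_inv,
    show (1 : ℝ) - 1 / 2 = 2⁻¹ by norm_num, show (1 : ℝ) - 2 = -1 by norm_num, neg_div_neg_eq,
    div_one, Real.log_div (by norm_num) hε.ne', Real.log_inv]
  · ring
  · exact notMem_uIcc_of_gt (by norm_num) (by linarith)
  · exact notMem_uIcc_of_lt hε (by norm_num)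

namespace phiIntegrand

variable {s : ℂ}

lemma continuousOn (s : ℂ) : ContinuousOn (phiIntegrand s) (Ioi 0 \ {1}) := by
  intro t ⟨ht0, ht1⟩
  refine ContinuousAt.continuousWithinAt ?_
  refine (continuousAt_ofReal_cpow_const t _ (Or.inr (ne_of_gt ht0))).div
    (continuous_const.sub continuous_ofReal).continuousAt ?_
  exact sub_ne_zero.2 fun h => ht1 (ofReal_eq_one.1 h.symm)

lemma intervalIntegrable {a b : ℝ} (h : [[a, b]] ⊆ Ioi 0 \ {1}) :
    IntervalIntegrable (phiIntegrand s) volume a b :=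
  ((continuousOn s).mono h).intervalIntegrable

lemma norm_le_of_le_half {t : ℝ} (ht0 : 0 < t) (ht : t ≤ 1 / 2) :
    ‖phiIntegrand s t‖ ≤ 2 * t ^ (s.re - 1) := by
  rw [phiIntegrand, norm_div, norm_cpow_eq_rpow_re_of_pos ht0, norm_one_sub_ofReal,
    abs_of_pos (by linarith), sub_re, one_re, div_le_iff₀ (by linarith)]
  have := Real.rpow_nonneg ht0.le (s.re - 1)
  nlinarith

lemma norm_le_of_two_le {t : ℝ} (ht : 2 ≤ t) :
    ‖phiIntegrand s t‖ ≤ 2 * t ^ (s.re - 2) := by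
  have ht0 : 0 < t := by linarith
  rw [phiIntegrand, norm_div, norm_cpow_eq_rpow_re_of_pos ht0, norm_one_sub_ofReal,
    abs_of_neg (by linarith), sub_re, one_re, div_le_iff₀ (by linarith),
    show s.re - 2 = s.re - 1 - 1 by ring, Real.rpow_sub_one ht0.ne' (s.re - 1)]
  have := Real.rpow_nonneg ht0.le (s.re - 1)
  rw [mul_div_assoc', div_mul_eq_mul_div, le_div_iff₀ ht0]
  nlinarith

lemma integrableOn_Ioc_zero_half (hs : 0 < s.re) :
    IntegrableOn (phiIntegrand s) (Ioc 0 (1 / 2)) := by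
  refine Integrable.mono' ?_
    (((continuousOn s).mono fun t ht => ⟨ht.1, ?_⟩).aestronglyMeasurable measurableSet_Ioc)
    ((ae_restrict_iff' measurableSet_Ioc).2 (.of_forall fun t ht => norm_le_of_le_half ht.1 ht.2))
  · exact ((intervalIntegrable_iff_integrableOn_Ioc_of_le (by norm_num)).1
      (intervalIntegral.intervalIntegrable_rpow' (by linarith))).const_mul 2
  · exact ne_of_lt (by linarith [ht.2])

lemma integrableOn_Ioi_two (hs : s.re < 1) : IntegrableOn (phiIntegrand s) (Ioi 2) := by
  refine Integrable.mono' ((integrableOn_Ioi_rpow_of_lt (by linarith) two_pos).const_mul 2)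
    (((continuousOn s).mono fun t (ht : 2 < t) =>
      ⟨two_pos.trans ht, (one_lt_two.trans ht).ne'⟩).aestronglyMeasurable measurableSet_Ioi)
    ((ae_restrict_iff' measurableSet_Ioi).2 (.of_forall fun t ht => norm_le_of_two_le ht.le))

lemma norm_integral_zero_half_le (hs : 0 < s.re) :
    ‖∫ t in (0 : ℝ)..1 / 2, phiIntegrand s t‖ ≤ 2 / s.re := by
  rw [intervalIntegral.integral_of_le (by norm_num)]
  refine (norm_integral_le_of_norm_le
    (((intervalIntegrable_iff_integrableOn_Ioc_of_le (by norm_num)).1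
      (intervalIntegral.intervalIntegrable_rpow' (by linarith))).const_mul 2)
    ((ae_restrict_iff' measurableSet_Ioc).2 (.of_forall fun t ht =>
      norm_le_of_le_half ht.1 ht.2))).trans ?_
  rw [← intervalIntegral.integral_of_le (by norm_num), intervalIntegral.integral_const_mul,
    integral_rpow (Or.inl (by linarith)), sub_add_cancel, Real.zero_rpow hs.ne', sub_zero,
    mul_div_assoc']
  gcongr
  calc 2 * (1 / 2 : ℝ) ^ s.re ≤ 2 * 1 :=
        by gcongr; exact Real.rpow_le_one (by norm_num) (by norm_num) hs.le
    _ = 2 := mul_one 2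

lemma norm_integral_Ioi_two_le (hs : s.re < 1) :
    ‖∫ t in Ioi 2, phiIntegrand s t‖ ≤ 2 / (1 - s.re) := by
  refine (norm_integral_le_of_norm_le
    ((integrableOn_Ioi_rpow_of_lt (by linarith) two_pos).const_mul 2)
    ((ae_restrict_iff' measurableSet_Ioi).2 (.of_forall fun t ht =>
      norm_le_of_two_le ht.le))).trans ?_
  rw [integral_const_mul, integral_Ioi_rpow_of_lt (by linarith) two_pos,
    show s.re - 2 + 1 = -(1 - s.re) by ring, div_neg, neg_div, neg_neg, mul_div_assoc']
  gcongr
  calc 2 * (2 : ℝ) ^ (-(1 - s.re)) ≤ 2 * 1 :=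
        by gcongr; exact Real.rpow_le_one_of_one_le_of_nonpos one_le_two (by linarith)
    _ = 2 := mul_one 2

lemma norm_sub_inv_one_sub_le (hs₀ : 0 ≤ s.re) (hs₁ : s.re ≤ 2) {t : ℝ} (ht : 1 / 2 ≤ t) :
    ‖phiIntegrand s t - ((1 - t)⁻¹ : ℝ)‖ ≤ 4 * ‖s - 1‖ := by
  rcases eq_or_ne t 1 with rfl | ht₁
  · simp [phiIntegrand]
  have hdiff : phiIntegrand s t - ((1 - t)⁻¹ : ℝ) = ((t : ℂ) ^ (s - 1) - 1) / (1 - t) := by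
    rw [phiIntegrand, ofReal_inv, ofReal_sub, ofReal_one, sub_div, one_div]
  rw [hdiff, norm_div, norm_one_sub_ofReal, div_le_iff₀ (abs_pos.2 (sub_ne_zero.2 ht₁.symm)),
    abs_sub_comm]
  exact norm_ofReal_cpow_sub_one_le (by rw [sub_re, one_re]; linarith)
    (by rw [sub_re, one_re]; linarith) ht

lemma norm_integral_near_one_le (hs₀ : 0 ≤ s.re) (hs₁ : s.re ≤ 2) {ε : ℝ} (hε₀ : 0 < ε)
    (hε : ε ≤ 1 / 2) :
    ‖(∫ t in (1 / 2 : ℝ)..1 - ε, phiIntegrand s t) + ∫ t in 1 + ε..2, phiIntegrand s t‖ ≤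
      8 * ‖s - 1‖ + 1 := by
  set g : ℝ → ℂ := fun t => phiIntegrand s t - ((1 - t)⁻¹ : ℝ)
  have hsplit : ∀ {a b : ℝ}, [[a, b]] ⊆ Ioi 0 \ {1} → ∫ t in a..b, phiIntegrand s t =
      (∫ t in a..b, g t) + ((∫ t in a..b, (1 - t)⁻¹ : ℝ) : ℂ) := by
    intro a b hab
    have hinv : IntervalIntegrable (fun t : ℝ => (((1 - t)⁻¹ : ℝ) : ℂ)) volume a b :=
      (continuous_ofReal.comp_continuousOn ((continuousOn_const.sub continuousOn_id).inv₀
        fun t ht => sub_ne_zero.2 (Ne.symm (hab ht).2))).intervalIntegrable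
    rw [← intervalIntegral.integral_ofReal,
      ← intervalIntegral.integral_add ((intervalIntegrable hab).sub hinv) hinv]
    simp only [sub_add_cancel]
  have hg : ∀ {a b : ℝ}, 1 / 2 ≤ a → a ≤ b → b ≤ a + 1 → ‖∫ t in a..b, g t‖ ≤ 4 * ‖s - 1‖ := by
    intro a b ha hab hba
    calc ‖∫ t in a..b, g t‖ ≤ 4 * ‖s - 1‖ * |b - a| :=
          intervalIntegral.norm_integral_le_of_norm_le_const fun t ht =>
            norm_sub_inv_one_sub_le hs₀ hs₁ (ha.trans (uIoc_of_le hab ▸ ht).1.le)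
      _ ≤ 4 * ‖s - 1‖ :=
          mul_le_of_le_one_right (by positivity) (by rw [abs_of_nonneg] <;> linarith)
  rw [hsplit, hsplit, add_add_add_comm, ← ofReal_add,
    integral_inv_one_sub_add_integral_inv_one_sub hε₀]
  · calc _ ≤ ‖∫ t in (1 / 2 : ℝ)..1 - ε, g t‖ + ‖∫ t in 1 + ε..2, g t‖ +
          ‖((-Real.log 2 : ℝ) : ℂ)‖ := norm_add_le_of_le (norm_add_le _ _) le_rfl
      _ ≤ 4 * ‖s - 1‖ + 4 * ‖s - 1‖ + 1 := by
          gcongr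
          · exact hg le_rfl (by linarith) (by linarith)
          · exact hg (by linarith) (by linarith) (by linarith)
          · rw [norm_real, norm_neg, Real.norm_of_nonneg (Real.log_nonneg one_le_two)]
            linarith [Real.log_two_lt_d9]
      _ = 8 * ‖s - 1‖ + 1 := by ring
  · exact uIcc_subset_Ioi_zero_diff_one (by linarith) two_pos
      (notMem_uIcc_of_lt (by linarith) one_lt_two)
  · exact uIcc_subset_Ioi_zero_diff_one one_half_pos (by linarith)
      (notMem_uIcc_of_gt one_half_lt_one (by linarith))

lemma integral_Ioo_add_integral_Ioi (hs₀ : 0 < s.re) (hs₁ : s.re < 1) {ε : ℝ} (hε₀ : 0 < ε)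
    (hε : ε ≤ 1 / 2) :
    (∫ t in Ioo 0 (1 - ε), phiIntegrand s t) + ∫ t in Ioi (1 + ε), phiIntegrand s t =
      (∫ t in (0 : ℝ)..1 / 2, phiIntegrand s t) +
        ((∫ t in (1 / 2 : ℝ)..1 - ε, phiIntegrand s t) + ∫ t in 1 + ε..2, phiIntegrand s t) +
        ∫ t in Ioi 2, phiIntegrand s t := by
  have hleft : IntervalIntegrable (phiIntegrand s) volume 0 (1 / 2) :=
    (intervalIntegrable_iff_integrableOn_Ioc_of_le (by norm_num)).2
      (integrableOn_Ioc_zero_half hs₀)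
  have hmid₁ : IntervalIntegrable (phiIntegrand s) volume (1 / 2) (1 - ε) :=
    intervalIntegrable (uIcc_subset_Ioi_zero_diff_one one_half_pos (by linarith)
      (notMem_uIcc_of_gt one_half_lt_one (by linarith)))
  have hmid₂ : IntervalIntegrable (phiIntegrand s) volume (1 + ε) 2 :=
    intervalIntegrable (uIcc_subset_Ioi_zero_diff_one (by linarith) two_pos
      (notMem_uIcc_of_lt (by linarith) one_lt_two))
  rw [← integral_Ioc_eq_integral_Ioo, ← intervalIntegral.integral_of_le (by linarith),
    ← intervalIntegral.integral_add_adjacent_intervals hleft hmid₁,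
    ← Ioc_union_Ioi_eq_Ioi (by linarith : 1 + ε ≤ 2),
    setIntegral_union (Ioc_disjoint_Ioi le_rfl) measurableSet_Ioi hmid₂.1
      (integrableOn_Ioi_two hs₁), ← intervalIntegral.integral_of_le (by linarith)]
  ring

end phiIntegrand

theorem norm_phiEps_le {s : ℂ} (hs₀ : 0 < s.re) (hs₁ : s.re < 1) {ε : ℝ} (hε₀ : 0 < ε)
    (hε : ε ≤ 1 / 2) :
    ‖phiEps ε s‖ ≤ 2 / s.re + (8 * ‖s - 1‖ + 1) + 2 / (1 - s.re) := by
  have hπ : ‖((1 / Real.pi : ℝ) : ℂ)‖ ≤ 1 := by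
    rw [norm_real, Real.norm_of_nonneg (by positivity), div_le_one Real.pi_pos]
    linarith [Real.pi_gt_three]
  rw [phiEps, norm_mul]
  refine (mul_le_of_le_one_left (norm_nonneg _) hπ).trans ?_
  change ‖(∫ t in Ioo 0 (1 - ε), phiIntegrand s t) + ∫ t in Ioi (1 + ε), phiIntegrand s t‖ ≤ _
  rw [phiIntegrand.integral_Ioo_add_integral_Ioi hs₀ hs₁ hε₀ hε]
  exact norm_add₃_le.trans (add_le_add_three (phiIntegrand.norm_integral_zero_half_le hs₀)
    (phiIntegrand.norm_integral_near_one_le hs₀.le (by linarith) hε₀ hε)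
    (phiIntegrand.norm_integral_Ioi_two_le hs₁))

/-- **estimate (30).** There is an absolute constant `C > 0` such that
`|φ_ε(s)| ≤ C|s|` for all `0 < ε < 1/2` and all `s` on the line `Re s = 1/2`. -/
theorem phiEps_uniform_bound :
    ∃ C : ℝ, 0 < C ∧ ∀ ε : ℝ, 0 < ε → ε < 1 / 2 → ∀ τ : ℝ,
      ‖phiEps ε (1 / 2 + τ * I)‖ ≤ C * ‖((1 / 2 : ℂ) + τ * I)‖ := by
  refine ⟨42, by norm_num, fun ε hε₀ hε τ => ?_⟩
  set s : ℂ := 1 / 2 + τ * I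
  have hre : s.re = 1 / 2 := by simp [s]
  have hs : 1 / 2 ≤ ‖s‖ := hre ▸ re_le_norm s
  have hbound := norm_phiEps_le (by rw [hre]; norm_num) (by rw [hre]; norm_num) hε₀ hε.le
  rw [hre] at hbound
  calc ‖phiEps ε s‖ ≤ 2 / (1 / 2) + (8 * ‖s - 1‖ + 1) + 2 / (1 - 1 / 2) := hbound
    _ ≤ 42 * ‖s‖ := by linarith [norm_sub_le s 1, norm_one (α := ℂ)]
end
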